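/- arXiv:2308.09352 — 3 statements merged into one kernel-verified Lean document; each statement's English description precedes it below -/
import Mathlib

section
/- Let (X,T) be a Cantor system and let ρ ≤ 1 be a compatible metric on X. Say that a subset A ⊆ X has the finite covering property if there is some N ∈ ℕ such that ⋃_{−N ≤ n ≤ N} T^n A = X. Then the following are equivalent: (1) (X,T) is essentially minimal; (2) for every clopen set A ⊆ X with precision the finite covering property, there is a clopen subset B ⊆ A with the finite covering property such that diam(B) ≤ diam(A)/2. -/
namespace SubshiftRank

/-! ### Words over the alphabet {0,1}; `false` plays the role of `0`, `true` of `1`. -/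

abbrev Word := List Bool

/-- `ℱ`: the set of finite nonempty words over `{0,1}` beginning and ending with `0`. -/
def FF : Set Word := {w | w ≠ [] ∧ w.head? = some false ∧ w.getLast? = some false}

/-- `spacer s = 1^s`. -/
def spacer (s : ℕ) : Word := List.replicate s true

/-- A building: a sequence of words `v₁, …, v_k` with spacers `s₁, …, s_k` (the `pairs`),
followed by a final word `v_{k+1}` (the `last`).  The assembled word is
`v₁1^{s₁}v₂1^{s₂}⋯v_k1^{s_k}v_{k+1}`. -/
structure Building where
  pairs : List (Word × ℕ)
  last : Word

/-- The word assembled by a building. -/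
def Building.word (b : Building) : Word :=
  b.pairs.foldr (fun p acc => p.1 ++ spacer p.2 ++ acc) b.last

/-- The words `v₁, …, v_{k+1}` used in a building (in order). -/
def Building.pieces (b : Building) : List Word := b.pairs.map Prod.fst ++ [b.last]

/-- `b` is a building from the set `S`: there is at least one spacer (i.e. `k ≥ 1`, at least
two pieces) and all the pieces belong to `S`. -/
def Building.FromSet (b : Building) (S : Set Word) : Prop :=
  b.pairs ≠ [] ∧ ∀ v ∈ b.pieces, v ∈ S

/-- The first word of a building. -/
def Building.firstPiece (b : Building) : Word := b.pieces.headI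

/-- Every word of `S` is used in the building. -/
def Building.UsesAll (b : Building) (S : Set Word) : Prop := ∀ v ∈ S, v ∈ b.pieces

/-- The spacer parameter of the building is bounded by `M`. -/
def Building.SpacersLE (b : Building) (M : ℕ) : Prop := ∀ p ∈ b.pairs, p.2 ≤ M

/-- `w` is built from `S`. -/
def BuiltFrom (w : Word) (S : Set Word) : Prop := ∃ b : Building, b.FromSet S ∧ b.word = w

/-- The `i`-th level `S_i = {v_{i,1}, …, v_{i,n_i}}` of a generating sequence. -/
def levelSet (ni : ℕ → ℕ) (wd : ℕ → ℕ → Word) (i : ℕ) : Set Word :=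
  {w | ∃ j, 1 ≤ j ∧ j ≤ ni i ∧ wd i j = w}

/-- A (symbolic) rank-`n` construction: a rank-`n` generating sequence `v_{i,j}`
(`i ≥ 0`, `1 ≤ j ≤ n_i ≤ n`) together with, for each `i` and `1 ≤ j ≤ n_{i+1}`, one chosen
building of `v_{i+1,j}` from `S_i`, the building of `v_{i+1,1}` starting with `v_{i,1}`. -/
structure RankConstruction (n : ℕ) where
  ni : ℕ → ℕ
  wd : ℕ → ℕ → Word
  bld : ℕ → ℕ → Building
  ni_pos : ∀ i, 1 ≤ ni i
  ni_le : ∀ i, ni i ≤ n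
  mem_FF : ∀ i j, 1 ≤ j → j ≤ ni i → wd i j ∈ FF
  wd_zero : ∀ j, 1 ≤ j → j ≤ ni 0 → wd 0 j = [false]
  bld_from : ∀ i j, 1 ≤ j → j ≤ ni (i + 1) → (bld i j).FromSet (levelSet ni wd i)
  bld_word : ∀ i j, 1 ≤ j → j ≤ ni (i + 1) → (bld i j).word = wd (i + 1) j
  bld_start : ∀ i, (bld i 1).firstPiece = wd i 1

/-- A rank-`n` construction is proper if `n_i = n` for all `i` and every word of `S_i` is used
in each chosen building. -/
def RankConstruction.Proper {n : ℕ} (c : RankConstruction n) : Prop :=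
  (∀ i, c.ni i = n) ∧
    ∀ i j, 1 ≤ j → j ≤ c.ni (i + 1) → (c.bld i j).UsesAll (levelSet c.ni c.wd i)

/-- All spacer parameters of all chosen buildings are bounded by `M`. -/
def RankConstruction.SpacersBoundedBy {n : ℕ} (c : RankConstruction n) (M : ℕ) : Prop :=
  ∀ i j, 1 ≤ j → j ≤ c.ni (i + 1) → (c.bld i j).SpacersLE M

/-- The spacer parameter of the construction is bounded. -/
def RankConstruction.BoundedSpacer {n : ℕ} (c : RankConstruction n) : Prop :=
  ∃ M, c.SpacersBoundedBy M

/-- `w` is of the form `α1^{s₁}v_{j₁}1^{s₂}v_{j₂}⋯v_{j_{k−1}}1^{s_k}β` where `k ≥ 1`, the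
middle words belong to `S`, `α` is a nonempty suffix of a word of `S` and `β` is a nonempty
prefix of a word of `S`. -/
def BadDecomp (w : Word) (S : Set Word) : Prop :=
  ∃ (α β : Word) (mids : List (ℕ × Word)) (sk : ℕ),
    α ≠ [] ∧ β ≠ [] ∧ (∃ a ∈ S, α <:+ a) ∧ (∃ b ∈ S, β <+: b) ∧
    (∀ p ∈ mids, p.2 ∈ S) ∧
    w = α ++ mids.foldr (fun p acc => spacer p.1 ++ p.2 ++ acc) (spacer sk ++ β)

/-- A rank-`n` construction is good if it is proper and no `v_{i,j}` has a bad decomposition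
over `S_i`. -/
def RankConstruction.Good {n : ℕ} (c : RankConstruction n) : Prop :=
  c.Proper ∧ ∀ i j, 1 ≤ j → j ≤ c.ni i → ¬ BadDecomp (c.wd i j) (levelSet c.ni c.wd i)

/-- The finite word `w` is a prefix (initial segment) of the infinite word `V`. -/
def InfExtends (V : ℕ → Bool) (w : Word) : Prop := ∀ k, k < w.length → w.getD k false = V k

/-- `V = lim_i v_{i,1}` is the infinite word determined by the construction. -/
def RankConstruction.HasLimit {n : ℕ} (c : RankConstruction n) (V : ℕ → Bool) : Prop :=
  (∀ i, InfExtends V (c.wd i 1)) ∧ ∀ m : ℕ, ∃ i, m ≤ (c.wd i 1).length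

/-- The infinite word `V` has a rank-`n` construction. -/
def HasRankConstr (V : ℕ → Bool) (n : ℕ) : Prop := ∃ c : RankConstruction n, c.HasLimit V

/-! ### Occurrences and subshifts -/

/-- The finite word `u` occurs in the infinite word `V` at position `p`. -/
def OccursAtInf (u : Word) (V : ℕ → Bool) (p : ℕ) : Prop :=
  ∀ k, k < u.length → u.getD k false = V (p + k)

/-- `u` is a subword of the infinite word `V`. -/
def OccursInInf (u : Word) (V : ℕ → Bool) : Prop := ∃ p, OccursAtInf u V p

/-- The finite word `u` occurs in the bi-infinite word `x` at position `p`. -/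
def OccursAtBi (u : Word) (x : ℤ → Bool) (p : ℤ) : Prop :=
  ∀ k : ℕ, k < u.length → u.getD k false = x (p + (k : ℤ))

/-- `u` is a subword of the bi-infinite word `x`. -/
def OccursInBi (u : Word) (x : ℤ → Bool) : Prop := ∃ p, OccursAtBi u x p

/-- The Bernoulli shift `σ` on `{0,1}^ℤ`. -/
def shift (x : ℤ → Bool) : ℤ → Bool := fun k => x (k + 1)

/-- The subshift generated by the infinite word `V`. -/
def XV (V : ℕ → Bool) : Set (ℤ → Bool) := {x | ∀ u : Word, OccursInBi u x → OccursInInf u V}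

/-- The `σ`-orbit of `x`. -/
def sorbit (x : ℤ → Bool) : Set (ℤ → Bool) := Set.range fun n : ℤ => fun k => x (k + n)

/-- A subshift: a nonempty closed shift-invariant subset of `{0,1}^ℤ`. -/
def IsSubshift (X : Set (ℤ → Bool)) : Prop := X.Nonempty ∧ IsClosed X ∧ shift '' X = X

/-- A minimal subshift: every orbit is dense. -/
def MinimalSubshift (X : Set (ℤ → Bool)) : Prop :=
  IsSubshift X ∧ ∀ x ∈ X, X ⊆ closure (sorbit x)

/-- `X` has symbolic rank at most `n`. -/
def SymbRankLE (X : Set (ℤ → Bool)) (n : ℕ) : Prop := ∃ V, HasRankConstr V n ∧ X = XV V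

/-- `X` has symbolic rank exactly `n`. -/
def SymbRankEq (X : Set (ℤ → Bool)) (n : ℕ) : Prop :=
  SymbRankLE X n ∧ ∀ m, SymbRankLE X m → n ≤ m

/-- `M` is a minimal subset of the system `(X, shift)`: a nonempty closed shift-invariant
subset of `X` with no proper nonempty closed shift-invariant subset. -/
def IsMinimalSubsetOf (X M : Set (ℤ → Bool)) : Prop :=
  M.Nonempty ∧ IsClosed M ∧ M ⊆ X ∧ shift '' M = M ∧
    ∀ M', M' ⊆ M → M'.Nonempty → IsClosed M' → shift '' M' = M' → M' = M

/-- A bi-infinite word `x` is built from `v`: there is a strictly increasing bi-infinite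
sequence of positions, with consecutive gaps at least `|v|` and unbounded in both directions,
at each of which `v` occurs, and `x` equals `1` outside those occurrences. -/
def BiBuiltFrom (x : ℤ → Bool) (v : Word) : Prop :=
  ∃ pos : ℤ → ℤ, StrictMono pos ∧
    (∀ i : ℤ, pos i + (v.length : ℤ) ≤ pos (i + 1)) ∧
    (∀ n : ℤ, ∃ i : ℤ, n < pos i) ∧ (∀ n : ℤ, ∃ i : ℤ, pos i < n) ∧
    (∀ i : ℤ, OccursAtBi v x (pos i)) ∧
    (∀ p : ℤ, (∀ i : ℤ, ¬ (pos i ≤ p ∧ p < pos i + (v.length : ℤ))) → x p = true)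

/-! ### General topological dynamics on (Cantor) metric spaces -/

/-- Every orbit of `T` is dense. -/
def MinimalHomeo {X : Type*} [TopologicalSpace X] (T : X ≃ₜ X) : Prop :=
  ∀ x : X, Dense (Set.range fun n : ℤ => (T.toEquiv ^ n) x)

/-- The system `(X, T)` is equicontinuous. -/
def EquicontinuousSys {X : Type*} [MetricSpace X] (T : X ≃ₜ X) : Prop :=
  ∀ ε : ℝ, 0 < ε → ∃ δ : ℝ, 0 < δ ∧
    ∀ (n : ℤ) (x y : X), dist x y < δ → dist ((T.toEquiv ^ n) x) ((T.toEquiv ^ n) y) < ε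

/-- `M` is a minimal set of `(X, T)`. -/
def IsMinimalSet {X : Type*} [TopologicalSpace X] (T : X → X) (M : Set X) : Prop :=
  M.Nonempty ∧ IsClosed M ∧ T '' M = M ∧
    ∀ M', M' ⊆ M → M'.Nonempty → IsClosed M' → T '' M' = M' → M' = M

/-- `(X, T)` is essentially minimal: it has a unique minimal set. -/
def EssentiallyMinimal {X : Type*} [TopologicalSpace X] (T : X → X) : Prop :=
  ∃! M, IsMinimalSet T M

/-- `A` has the finite covering property: `⋃_{−N ≤ n ≤ N} T^n A = X` for some `N`. -/
def FiniteCovering {X : Type*} [TopologicalSpace X] (T : X ≃ₜ X) (A : Set X) : Prop :=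
  ∃ N : ℕ, (⋃ n ∈ Finset.Icc (-(N : ℤ)) (N : ℤ), ⇑(T.toEquiv ^ n) '' A) = Set.univ

/-- A finite partition of the whole space into clopen sets. -/
def IsClopenPartition {X : Type*} [TopologicalSpace X] (Q : Finset (Set X)) : Prop :=
  (∀ q ∈ Q, IsClopen q) ∧ (⋃ q ∈ Q, q) = Set.univ ∧
    ∀ q ∈ Q, ∀ q' ∈ Q, q ≠ q' → Disjoint q q'

/-- A Kakutani–Rohlin partition of `(X, T)`: clopen bases `B 0, …, B (d−1)` with heights
`h 0, …, h (d−1)` such that the sets `T^j (B k)` (`j < h k`) form a partition of `X` and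
`⋃_k T^{h k} (B k) = ⋃_k B k`. -/
structure KRPart {X : Type*} [TopologicalSpace X] (T : X → X) where
  d : ℕ
  B : Fin d → Set X
  h : Fin d → ℕ
  d_pos : 0 < d
  h_pos : ∀ k, 0 < h k
  clopen : ∀ k, IsClopen (B k)
  disj : ∀ (k k' : Fin d) (j j' : ℕ), j < h k → j' < h k' → (k, j) ≠ (k', j') →
    Disjoint (T^[j] '' B k) (T^[j'] '' B k')
  cover : (⋃ k, ⋃ j ∈ Finset.range (h k), T^[j] '' B k) = Set.univ
  base_eq : (⋃ k, T^[h k] '' B k) = ⋃ k, B k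

/-- The base of a Kakutani–Rohlin partition. -/
def KRPart.base {X : Type*} [TopologicalSpace X] {T : X → X} (P : KRPart T) : Set X :=
  ⋃ k, P.B k

/-- `(X, T)` has topological rank at most `m` (Kakutani–Rohlin characterization). -/
def TopRankLEGen {X : Type*} [MetricSpace X] (T : X → X) (m : ℕ) : Prop :=
  ∃ x : X, ∀ ε : ℝ, 0 < ε → ∃ P : KRPart T, P.d ≤ m ∧
    (∀ (k : Fin P.d) (j : ℕ), j < P.h k → Metric.diam (T^[j] '' P.B k) < ε) ∧
    Metric.diam P.base < ε ∧ x ∈ P.base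

/-! ### Kakutani–Rohlin partitions and topological rank for subshifts -/

/-- A Kakutani–Rohlin partition of the subshift `(X, σ)`. -/
structure KRPartOn (X : Set (ℤ → Bool)) where
  d : ℕ
  B : Fin d → Set (ℤ → Bool)
  h : Fin d → ℕ
  d_pos : 0 < d
  h_pos : ∀ k, 0 < h k
  subset : ∀ k, B k ⊆ X
  clopen : ∀ k, IsClopen {y : X | (y : ℤ → Bool) ∈ B k}
  disj : ∀ (k k' : Fin d) (j j' : ℕ), j < h k → j' < h k' → (k, j) ≠ (k', j') →
    Disjoint (shift^[j] '' B k) (shift^[j'] '' B k')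
  cover : (⋃ k, ⋃ j ∈ Finset.range (h k), shift^[j] '' B k) = X
  base_eq : (⋃ k, shift^[h k] '' B k) = ⋃ k, B k

/-- The base of a Kakutani–Rohlin partition of a subshift. -/
def KRPartOn.base {X : Set (ℤ → Bool)} (P : KRPartOn X) : Set (ℤ → Bool) := ⋃ k, P.B k

/-- All elements of `A` agree on the window `[−N, N]`; for the canonical metric on `2^ℤ`
this says exactly that `diam(A) ≤ 2^{−N}`. -/
def AgreeOn (N : ℕ) (A : Set (ℤ → Bool)) : Prop :=
  ∀ y ∈ A, ∀ z ∈ A, ∀ k : ℤ, |k| ≤ (N : ℤ) → y k = z k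

/-- The subshift `(X, σ)` has topological rank at most `m` (Kakutani–Rohlin
characterization, with smallness of diameters expressed by agreement on windows,
matching the canonical compatible metric on `2^ℤ`). -/
def TopRankLE (X : Set (ℤ → Bool)) (m : ℕ) : Prop :=
  ∃ x ∈ X, ∀ N : ℕ, ∃ P : KRPartOn X, P.d ≤ m ∧
    (∀ (k : Fin P.d) (j : ℕ), j < P.h k → AgreeOn N (shift^[j] '' P.B k)) ∧
    AgreeOn N P.base ∧ x ∈ P.base

/-! ### Factor maps and conjugacy -/

/-- `φ` is a (topological) factor map from the subshift `Y` onto the subshift `X`. -/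
def IsFactorMapOn (Y X : Set (ℤ → Bool)) (φ : (ℤ → Bool) → (ℤ → Bool)) : Prop :=
  ContinuousOn φ Y ∧ φ '' Y = X ∧ ∀ y ∈ Y, φ (shift y) = shift (φ y)

/-- `X` is a topological factor of `Y`. -/
def SubshiftFactor (Y X : Set (ℤ → Bool)) : Prop := ∃ φ, IsFactorMapOn Y X φ

/-- The subshifts `Y` and `X` are conjugate. -/
def SubshiftConjugate (Y X : Set (ℤ → Bool)) : Prop :=
  ∃ φ, IsFactorMapOn Y X φ ∧ Set.InjOn φ Y

/-- `(X, T)` is conjugate to the subshift `(Y, σ)`. -/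
def ConjugateToSubshift {X : Type*} [TopologicalSpace X] (T : X ≃ₜ X) (Y : Set (ℤ → Bool)) :
    Prop :=
  ∃ φ : X → (ℤ → Bool), Continuous φ ∧ Function.Injective φ ∧ Set.range φ = Y ∧
    ∀ x, φ (T x) = shift (φ x)

/-- The Boolean algebra of sets generated by `G`. -/
inductive GenBoolAlg {X : Type*} (G : Set (Set X)) : Set X → Prop
  | basic (A : Set X) : A ∈ G → GenBoolAlg G A
  | empty : GenBoolAlg G ∅
  | compl (A : Set X) : GenBoolAlg G A → GenBoolAlg G Aᶜ
  | union (A B : Set X) : GenBoolAlg G A → GenBoolAlg G B → GenBoolAlg G (A ∪ B)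

/-- `(T, A)` is generating: the smallest Boolean algebra containing all `T^n A` contains
every clopen set. -/
def Generating {X : Type*} [TopologicalSpace X] (T : X ≃ₜ X) (A : Set X) : Prop :=
  ∀ U : Set X, IsClopen U → GenBoolAlg {B : Set X | ∃ n : ℤ, B = ⇑(T.toEquiv ^ n) '' A} U

/-- The return-times word `Ret_A(x₀) ∈ 2^ℤ` of `x₀` to `A`. -/
noncomputable def retWord {X : Type*} [TopologicalSpace X] (T : X ≃ₜ X) (A : Set X) (x₀ : X) : ℤ → Bool :=
  fun n => @ite _ ((T.toEquiv ^ n) x₀ ∈ A) (Classical.propDecidable _) true false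

/-! If `M` is the unique minimal set, the points whose orbits avoid a clopen neighbourhood `B`
of a point of `M` form a closed invariant set containing no minimal set, hence an empty one; so
the translates of `B` cover `X`, finitely many of them by compactness, and `B` may be taken of
arbitrarily small diameter. Conversely, a set with the finite covering property meets every
minimal set, so finite-covering sets of arbitrarily small diameter rule out two disjoint minimal
sets, while two minimal sets that meet coincide. -/

open Set Function
open scoped Pointwise

theorem _root_.Homeomorph.coe_toEquiv_zpow {X : Type*} [TopologicalSpace X] (T : X ≃ₜ X)
    (n : ℤ) : ⇑(T.toEquiv ^ n) = ⇑(T ^ n) :=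
  congrArg DFunLike.coe (map_zpow (MonoidHom.mk' Homeomorph.toEquiv fun _ _ => rfl) T n).symm

theorem image_zpow_eq_of_image_eq {X : Type*} {e : Equiv.Perm X} {M : Set X} (h : e '' M = M)
    (n : ℤ) : ⇑(e ^ n) '' M = M := by
  have he : e ∈ MulAction.stabilizer (Equiv.Perm X) M := by
    rwa [MulAction.mem_stabilizer_iff, ← image_smul]
  have := MulAction.mem_stabilizer_iff.mp (zpow_mem he n)
  rwa [← image_smul] at this

section Minimal

variable {X : Type*} [TopologicalSpace X]

theorem IsMinimalSet.eq_of_inter_nonempty {T : X → X} (hT : Injective T) {M M' : Set X}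
    (hM : IsMinimalSet T M) (hM' : IsMinimalSet T M') (h : (M ∩ M').Nonempty) : M = M' := by
  have hinv : T '' (M ∩ M') = M ∩ M' := by rw [image_inter hT, hM.2.2.1, hM'.2.2.1]
  have hcl : IsClosed (M ∩ M') := hM.2.1.inter hM'.2.1
  rw [← hM.2.2.2 _ inter_subset_left h hcl hinv, hM'.2.2.2 _ inter_subset_right h hcl hinv]

theorem exists_isMinimalSet_subset [CompactSpace X] {T : X → X} (hT : Injective T) {C : Set X}
    (hne : C.Nonempty) (hcl : IsClosed C) (hinv : T '' C = C) :
    ∃ M ⊆ C, IsMinimalSet T M := by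
  let S : Set (Set X) := {M | M.Nonempty ∧ IsClosed M ∧ T '' M = M}
  have chain_bound :
      ∀ c ⊆ S, IsChain (· ⊆ ·) c → c.Nonempty → ∃ lb ∈ S, ∀ s ∈ c, lb ⊆ s := by
    intro c hcS hchain hcne
    have : Nonempty c := hcne.to_subtype
    refine ⟨⋂₀ c, ⟨?_, isClosed_sInter fun U hU => (hcS hU).2.1, ?_⟩,
      fun _ => sInter_subset_of_mem⟩
    · exact IsCompact.nonempty_sInter_of_directed_nonempty_isCompact_isClosed
        (IsChain.directedOn hchain.symm) (fun U hU => (hcS hU).1)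
        (fun U hU => (hcS hU).2.1.isCompact) fun U hU => (hcS hU).2.1
    · rw [sInter_eq_iInter, hT.injOn.image_iInter_eq]
      exact iInter_congr fun U => (hcS U.2).2.2
  obtain ⟨M, hMC, hM⟩ := zorn_superset_nonempty S chain_bound C ⟨hne, hcl, hinv⟩
  exact ⟨M, hMC, hM.1.1, hM.1.2.1, hM.1.2.2,
    fun M' hM'M hne' hcl' hinv' => hM'M.antisymm (hM.2 ⟨hne', hcl', hinv'⟩ hM'M)⟩

end Minimal

section FiniteCovering

variable {X : Type*} [TopologicalSpace X] {T : X ≃ₜ X} {B : Set X}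

theorem image_iUnion_zpow_image (T : X ≃ₜ X) (B : Set X) :
    T '' ⋃ n : ℤ, ⇑(T.toEquiv ^ n) '' B = ⋃ n : ℤ, ⇑(T.toEquiv ^ n) '' B := by
  simp only [image_iUnion, image_image]
  refine (Equiv.addLeft (1 : ℤ)).iSup_congr fun n => ?_
  ext x
  simp [zpow_one_add, Equiv.Perm.mul_apply]

theorem isOpen_zpow_image (T : X ≃ₜ X) (hB : IsOpen B) (n : ℤ) :
    IsOpen (⇑(T.toEquiv ^ n) '' B) := by
  rw [T.coe_toEquiv_zpow]
  exact (T ^ n).isOpenMap B hB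

theorem FiniteCovering.inter_nonempty (hB : FiniteCovering T B) {M : Set X} (hne : M.Nonempty)
    (hinv : T '' M = M) : (B ∩ M).Nonempty := by
  obtain ⟨N, hN⟩ := hB
  obtain ⟨m, hm⟩ := hne
  obtain ⟨n, -, b, hb, rfl⟩ := mem_iUnion₂.mp (hN.symm ▸ mem_univ m : m ∈ _)
  rw [← image_zpow_eq_of_image_eq hinv n, (Equiv.injective _).mem_set_image] at hm
  exact ⟨b, hb, hm⟩

theorem FiniteCovering.of_iUnion_eq_univ [CompactSpace X] (hB : IsOpen B)
    (h : ⋃ n : ℤ, ⇑(T.toEquiv ^ n) '' B = univ) : FiniteCovering T B := by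
  obtain ⟨t, ht⟩ := isCompact_univ.elim_finite_subcover (fun n : ℤ => ⇑(T.toEquiv ^ n) '' B)
    (isOpen_zpow_image T hB) h.ge
  refine ⟨t.sup Int.natAbs, eq_univ_of_univ_subset fun x hx => ?_⟩
  obtain ⟨n, hn, hxn⟩ := mem_iUnion₂.mp (ht hx)
  have := t.le_sup (f := Int.natAbs) hn
  exact mem_iUnion₂.mpr ⟨n, Finset.mem_Icc.mpr (by omega), hxn⟩

theorem EssentiallyMinimal.finiteCovering [CompactSpace X] (hT : EssentiallyMinimal ⇑T)
    (hB : IsOpen B) {M : Set X} (hM : IsMinimalSet T M) (hBM : (B ∩ M).Nonempty) :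
    FiniteCovering T B := by
  refine .of_iUnion_eq_univ hB ?_
  set O := ⋃ n : ℤ, ⇑(T.toEquiv ^ n) '' B
  by_contra hO
  have hcl : IsClosed Oᶜ := (isOpen_iUnion (isOpen_zpow_image T hB)).isClosed_compl
  have hinv : T '' Oᶜ = Oᶜ := by rw [image_compl_eq T.bijective, image_iUnion_zpow_image]
  obtain ⟨M', hM'O, hM'⟩ :=
    exists_isMinimalSet_subset T.injective (nonempty_compl.mpr hO) hcl hinv
  obtain ⟨p, hpB, hpM⟩ := hBM
  rw [hT.unique hM' hM] at hM'O
  exact hM'O hpM (mem_iUnion.mpr ⟨0, p, hpB, rfl⟩)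

end FiniteCovering

section Metric

variable {X : Type*} [MetricSpace X]

theorem exists_isClopen_mem_subset_diam_le [CompactSpace X] [TotallyDisconnectedSpace X]
    {U : Set X} {p : X} (hU : IsOpen U) (hp : p ∈ U) {ε : ℝ} (hε : 0 < ε) :
    ∃ B, IsClopen B ∧ p ∈ B ∧ B ⊆ U ∧ Metric.diam B ≤ ε := by
  obtain ⟨B, hB, hpB, hBU⟩ := compact_exists_isClopen_in_isOpen
    (hU.inter Metric.isOpen_ball) ⟨hp, Metric.mem_ball_self (half_pos hε)⟩
  refine ⟨B, hB, hpB, hBU.trans inter_subset_left, ?_⟩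
  calc Metric.diam B ≤ Metric.diam (Metric.ball p (ε / 2)) :=
        Metric.diam_mono (hBU.trans inter_subset_right) Metric.isBounded_ball
    _ ≤ 2 * (ε / 2) := Metric.diam_ball (half_pos hε).le
    _ = ε := by ring

theorem exists_finiteCovering_diam_lt {T : X ≃ₜ X}
    (h : ∀ A : Set X, IsClopen A → FiniteCovering T A →
      ∃ B ⊆ A, IsClopen B ∧ FiniteCovering T B ∧ Metric.diam B ≤ Metric.diam A / 2)
    {ε : ℝ} (hε : 0 < ε) : ∃ B, FiniteCovering T B ∧ Metric.diam B < ε := by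
  have halving : ∀ k : ℕ, ∃ B, IsClopen B ∧ FiniteCovering T B ∧
      Metric.diam B ≤ Metric.diam (univ : Set X) * (1 / 2) ^ k := by
    intro k
    induction k with
    | zero =>
      refine ⟨univ, isClopen_univ, ⟨0, ?_⟩, by simp⟩
      simp [image_univ_of_surjective (Equiv.surjective _)]
    | succ k ih =>
      obtain ⟨A, hA, hAcov, hAdiam⟩ := ih
      obtain ⟨B, -, hB, hBcov, hBdiam⟩ := h A hA hAcov
      exact ⟨B, hB, hBcov, by rw [pow_succ]; linarith⟩
  have hlim : Filter.Tendsto (fun k : ℕ => Metric.diam (univ : Set X) * (1 / 2) ^ k)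
      Filter.atTop (nhds 0) := by
    simpa using (tendsto_pow_atTop_nhds_zero_of_lt_one (r := (1 / 2 : ℝ)) (by norm_num)
      (by norm_num)).const_mul (Metric.diam (univ : Set X))
  obtain ⟨k, hk⟩ := (hlim.eventually (gt_mem_nhds hε)).exists
  obtain ⟨B, -, hBcov, hBdiam⟩ := halving k
  exact ⟨B, hBcov, hBdiam.trans_lt hk⟩

theorem IsMinimalSet.eq_of_forall_finiteCovering_diam_lt [CompactSpace X] {T : X ≃ₜ X}
    (h : ∀ ε > 0, ∃ B, FiniteCovering T B ∧ Metric.diam B < ε) {M M' : Set X}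
    (hM : IsMinimalSet T M) (hM' : IsMinimalSet T M') : M = M' := by
  refine hM.eq_of_inter_nonempty T.injective hM'
    (not_disjoint_iff_nonempty_inter.mp fun hdisj => ?_)
  obtain ⟨δ, hδ, hsep⟩ := hdisj.exists_thickenings hM.2.1.isCompact hM'.2.1
  obtain ⟨B, hBcov, hBdiam⟩ := h δ hδ
  obtain ⟨x, hxB, hxM⟩ := hBcov.inter_nonempty hM.1 hM.2.2.1
  obtain ⟨y, hyB, hyM'⟩ := hBcov.inter_nonempty hM'.1 hM'.2.2.1
  have hxy : dist y x < δ :=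
    (Metric.dist_le_diam_of_mem (isCompact_univ.isBounded.subset (subset_univ B)) hyB hxB).trans_lt
      hBdiam
  exact disjoint_left.mp hsep (Metric.mem_thickening_iff.mpr ⟨x, hxM, hxy⟩)
    (Metric.self_subset_thickening hδ _ hyM')

end Metric

theorem statement_0_general {X : Type*} [MetricSpace X] [CompactSpace X] [Nonempty X]
    [TotallyDisconnectedSpace X] (T : X ≃ₜ X) :
    EssentiallyMinimal ⇑T ↔
      ∀ A : Set X, IsClopen A → FiniteCovering T A →
        ∃ B : Set X, B ⊆ A ∧ IsClopen B ∧ FiniteCovering T B ∧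
          Metric.diam B ≤ Metric.diam A / 2 := by
  constructor
  · intro hT A hA hAcov
    obtain ⟨M, hM⟩ := hT.exists
    obtain ⟨p, hpA, hpM⟩ := hAcov.inter_nonempty hM.1 hM.2.2.1
    rcases (Metric.diam_nonneg (s := A)).eq_or_lt with hA0 | hApos
    · exact ⟨A, subset_rfl, hA, hAcov, by rw [← hA0]; simp⟩
    obtain ⟨B, hB, hpB, hBA, hBdiam⟩ :=
      exists_isClopen_mem_subset_diam_le hA.isOpen hpA (half_pos hApos)
    exact ⟨B, hBA, hB, hT.finiteCovering hB.isOpen hM ⟨p, hpB, hpM⟩, hBdiam⟩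
  · intro h
    obtain ⟨M, -, hM⟩ := exists_isMinimalSet_subset T.injective univ_nonempty isClosed_univ
      (image_univ_of_surjective T.surjective)
    exact ⟨M, hM, fun M' hM' =>
      hM'.eq_of_forall_finiteCovering_diam_lt (fun ε hε => exists_finiteCovering_diam_lt
        (fun A hA hAcov => by simpa only [exists_prop] using h A hA hAcov) hε) hM⟩

/-- Proposition 3.1. A Cantor system `(X,T)` with a compatible metric `≤ 1`
is essentially minimal iff every clopen set with the finite covering property contains a clopen
subset with the finite covering property of at most half the diameter. -/
theorem statement_0 {X : Type*} [MetricSpace X] [CompactSpace X] [Nonempty X]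
    [TotallyDisconnectedSpace X] (hPerf : Perfect (Set.univ : Set X))
    (hbd : ∀ x y : X, dist x y ≤ 1) (T : X ≃ₜ X) :
    EssentiallyMinimal ⇑T ↔
      ∀ A : Set X, IsClopen A → FiniteCovering T A →
        ∃ B : Set X, B ⊆ A ∧ IsClopen B ∧ FiniteCovering T B ∧
          Metric.diam B ≤ Metric.diam A / 2 :=
  statement_0_general T

end SubshiftRank
end

section
/- Let (X,T) be an essentially minimal Cantor system, let ρ ≤ 1 be a compatible metric on X, and let n ≥ 1. Then the following are equivalent: (A) there exists x ∈ X such that for every ε > 0 there is a Kakutani–Rohlin partition P of (X,T) with at most n towers such that diam(A) < ε for every A ∈ P, diam(B(P)) < ε, and x ∈ B(P); (B) for every clopen subset Z ⊆ X with the finite covering property (i.e. ⋃_{−N ≤ k ≤ N} T^k Z = X for some N ∈ ℕ) and every finite partition Q of X into clopen sets, there is a Kakutani–Rohlin partition P of (X,T) with at most n towers such that B(P) ⊆ Z, diam(B(P)) ≤ diam(Z)/2, and P refines Q (every element of Q is a union of elements of P). -/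
/-!
(A) ⇒ (B): the orbit of `x` meets `Z`, say `T^m x ∈ Z`. The homeomorphism `T^m` commutes with
`T`, so it carries a Kakutani–Rohlin partition through `x` to one through `T^m x`. Taking the
partition fine enough, a Lebesgue number argument for `T^m` puts its base inside `Z` with
diameter at most `diam Z / 2` and makes its levels refine `Q`.

(B) ⇒ (A): applying (B) to the base of the previous partition and to a clopen partition of mesh
`2^{-i}` gives Kakutani–Rohlin partitions with nested bases whose diameters and level diameters
tend to `0`; any point in the intersection of the bases works.
-/

namespace Homeomorph

variable {X : Type*} [TopologicalSpace X]

def toPerm : (X ≃ₜ X) →* Equiv.Perm X where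
  toFun := Homeomorph.toEquiv
  map_one' := rfl
  map_mul' _ _ := rfl

theorem coe_zpow (T : X ≃ₜ X) (m : ℤ) : ⇑(T ^ m) = ⇑(T.toEquiv ^ m) :=
  congrArg DFunLike.coe (map_zpow toPerm T m)

theorem semiconj_zpow (T : X ≃ₜ X) (m : ℤ) : Function.Semiconj ⇑(T ^ m) T T :=
  fun x => DFunLike.congr_fun ((Commute.refl T).zpow_left m).eq x

end Homeomorph

theorem Function.Semiconj.image_iterate_image {α : Type*} {e T : α → α}
    (he : Function.Semiconj e T T) (j : ℕ) (s : Set α) : T^[j] '' (e '' s) = e '' (T^[j] '' s) :=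
  ((he.iterate_right j).set_image s).symm

theorem exists_pos_forall_image_subset_of_diam_lt {X Y : Type*} [PseudoMetricSpace X]
    [CompactSpace X] [Nonempty X] [TopologicalSpace Y] {f : X → Y} (hf : Continuous f)
    {ι : Sort*} {c : ι → Set Y} (hc : ∀ i, IsOpen (c i)) (hcover : ⋃ i, c i = Set.univ) :
    ∃ δ > 0, ∀ s : Set X, Metric.diam s < δ → ∃ i, f '' s ⊆ c i := by
  obtain ⟨δ, hδ, hball⟩ := lebesgue_number_lemma_of_metric (c := fun i => f ⁻¹' c i)
    isCompact_univ (fun i => (hc i).preimage hf) (by simp [← Set.preimage_iUnion, hcover])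
  refine ⟨δ, hδ, fun s hs => ?_⟩
  rcases s.eq_empty_or_nonempty with rfl | ⟨y, hy⟩
  · obtain ⟨i, -⟩ := Set.mem_iUnion.1 (hcover ▸ Set.mem_univ (f (Classical.arbitrary X)))
    exact ⟨i, by simp⟩
  · obtain ⟨i, hi⟩ := hball y (Set.mem_univ y)
    refine ⟨i, Set.image_subset_iff.2 fun z hz => hi ?_⟩
    exact (Metric.dist_le_diam_of_mem Metric.isBounded_of_compactSpace hz hy).trans_lt hs

theorem exists_pos_forall_diam_image_le {X Y : Type*} [PseudoMetricSpace X] [CompactSpace X]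
    [Nonempty X] [PseudoMetricSpace Y] {f : X → Y} (hf : Continuous f) {r : ℝ} (hr : 0 < r) :
    ∃ δ > 0, ∀ s : Set X, Metric.diam s < δ → Metric.diam (f '' s) ≤ r := by
  obtain ⟨δ, hδ, hball⟩ := exists_pos_forall_image_subset_of_diam_lt hf
    (fun y => Metric.isOpen_ball (x := y) (ε := r / 2))
    (Set.eq_univ_of_forall fun y => Set.mem_iUnion.2 ⟨y, Metric.mem_ball_self (by positivity)⟩)
  refine ⟨δ, hδ, fun s hs => ?_⟩
  obtain ⟨y, hy⟩ := hball s hs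
  calc Metric.diam (f '' s) ≤ 2 * (r / 2) :=
        (Metric.diam_mono hy Metric.isBounded_ball).trans (Metric.diam_ball (by positivity))
    _ = r := by ring

namespace SubshiftRank

theorem FiniteCovering.exists_zpow_apply_mem {X : Type*} [TopologicalSpace X] {T : X ≃ₜ X}
    {Z : Set X} (hZ : FiniteCovering T Z) (x : X) : ∃ m : ℤ, (T ^ m) x ∈ Z := by
  obtain ⟨N, hN⟩ := hZ
  obtain ⟨m, -, z, hz, rfl⟩ := Set.mem_iUnion₂.1 (hN.symm ▸ Set.mem_univ x)
  refine ⟨-m, ?_⟩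
  rwa [zpow_neg, Homeomorph.inv_apply, ← Homeomorph.coe_zpow, Homeomorph.symm_apply_apply]

theorem isClopenPartition_fibers {X α : Type*} [TopologicalSpace X] [Finite α] {f : X → α}
    (hf : IsLocallyConstant f) :
    IsClopenPartition (Set.finite_range fun a => f ⁻¹' {a}).toFinset := by
  simp only [IsClopenPartition, Set.Finite.mem_toFinset, Set.mem_range, forall_exists_index,
    forall_apply_eq_imp_iff]
  refine ⟨fun a => hf.isClopen_fiber a, ?_, fun a b hab => ?_⟩
  · exact Set.eq_univ_of_forall fun x => Set.mem_iUnion₂.2 ⟨_, ⟨f x, rfl⟩, rfl⟩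
  · exact Disjoint.preimage f (Set.disjoint_singleton.2 fun h => hab (h ▸ rfl))

theorem exists_isClopenPartition_diam_lt {X : Type*} [MetricSpace X] [CompactSpace X]
    [TotallyDisconnectedSpace X] {ε : ℝ} (hε : 0 < ε) :
    ∃ Q : Finset (Set X), IsClopenPartition Q ∧ ∀ q ∈ Q, Metric.diam q < ε := by
  choose C hC hxC hCball using fun x : X =>
    compact_exists_isClopen_in_isOpen Metric.isOpen_ball
      (Metric.mem_ball_self (x := x) (by positivity : 0 < ε / 3))
  obtain ⟨t, ht⟩ := isCompact_univ.elim_finite_subcover C (fun x => (hC x).isOpen)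
    fun x _ => Set.mem_iUnion.2 ⟨x, hxC x⟩
  -- `Q` consists of the atoms of the Boolean algebra generated by the finitely many `C i`.
  let f : X → t → Bool := fun y i => (C i).boolIndicator y
  have hf : IsLocallyConstant f := (IsLocallyConstant.iff_continuous f).2
    (continuous_pi fun i => (continuous_boolIndicator_iff_isClopen _).2 (hC i))
  refine ⟨_, isClopenPartition_fibers hf, ?_⟩
  simp only [Set.Finite.mem_toFinset, Set.mem_range, forall_exists_index, forall_apply_eq_imp_iff]
  intro a
  rcases (f ⁻¹' {a}).eq_empty_or_nonempty with h | ⟨y, hy⟩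
  · simp [h, hε]
  obtain ⟨i, hi, hyi⟩ := Set.mem_iUnion₂.1 (ht (Set.mem_univ y))
  have hfiber : f ⁻¹' {a} ⊆ C i := fun z hz => by
    simpa [f, Set.boolIndicator, hyi] using congrFun (hz.trans hy.symm) ⟨i, hi⟩
  calc Metric.diam (f ⁻¹' {a}) ≤ Metric.diam (Metric.ball i (ε / 3)) :=
        Metric.diam_mono (hfiber.trans (hCball i)) Metric.isBounded_ball
    _ ≤ 2 * (ε / 3) := Metric.diam_ball (by positivity)
    _ < ε := by linarith

namespace KRPart

variable {X : Type*} [TopologicalSpace X]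

theorem isClopen_base {T : X → X} (P : KRPart T) : IsClopen P.base :=
  isClopen_iUnion_of_finite P.clopen

theorem base_nonempty [Nonempty X] {T : X → X} (P : KRPart T) : P.base.Nonempty := by
  have hx : Classical.arbitrary X ∈ ⋃ k, ⋃ j ∈ Finset.range (P.h k), T^[j] '' P.B k :=
    P.cover ▸ Set.mem_univ _
  simp only [Set.mem_iUnion, Set.mem_image] at hx
  obtain ⟨k, j, -, b, hb, -⟩ := hx
  exact ⟨b, Set.mem_iUnion.2 ⟨k, hb⟩⟩

def trivial (T : X ≃ₜ X) : KRPart ⇑T where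
  d := 1
  B _ := Set.univ
  h _ := 1
  d_pos := one_pos
  h_pos _ := one_pos
  clopen _ := isClopen_univ
  disj k k' j j' hj hj' hne := absurd (Prod.ext (Subsingleton.elim k k') (by omega)) hne
  cover := by simp [Set.iUnion_const]
  base_eq := by simp only [Function.iterate_one, Set.image_univ, T.surjective.range_eq]

def map {T : X → X} (P : KRPart T) (e : X ≃ₜ X) (he : Function.Semiconj e T T) :
    KRPart T where
  d := P.d
  B k := e '' P.B k
  h := P.h
  d_pos := P.d_pos
  h_pos := P.h_pos
  clopen k := ⟨e.isClosed_image.2 (P.clopen k).1, e.isOpen_image.2 (P.clopen k).2⟩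
  disj k k' j j' hj hj' hne := by
    rw [he.image_iterate_image, he.image_iterate_image, Set.disjoint_image_iff e.injective]
    exact P.disj k k' j j' hj hj' hne
  cover := by
    have : (⋃ k, ⋃ j ∈ Finset.range (P.h k), T^[j] '' (e '' P.B k))
        = e '' ⋃ k, ⋃ j ∈ Finset.range (P.h k), T^[j] '' P.B k := by
      simp only [he.image_iterate_image, Set.image_iUnion]
    rw [this, P.cover, Set.image_univ, e.range_coe]
  base_eq := by
    simp only [he.image_iterate_image, ← Set.image_iUnion, P.base_eq]

theorem map_base {T : X → X} (P : KRPart T) (e : X ≃ₜ X) (he : Function.Semiconj e T T) :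
    (P.map e he).base = e '' P.base := by
  simp only [base, map, Set.image_iUnion]

theorem finiteCovering_base (T : X ≃ₜ X) (P : KRPart ⇑T) : FiniteCovering T P.base := by
  refine ⟨Finset.univ.sup P.h, Set.eq_univ_of_forall fun y => ?_⟩
  have hy : y ∈ ⋃ k, ⋃ j ∈ Finset.range (P.h k), (⇑T)^[j] '' P.B k :=
    P.cover ▸ Set.mem_univ y
  simp only [Set.mem_iUnion, Finset.mem_range] at hy
  obtain ⟨k, j, hj, hyj⟩ := hy
  have hjN : j ≤ Finset.univ.sup P.h := hj.le.trans (Finset.le_sup (Finset.mem_univ k))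
  refine Set.mem_iUnion₂.2 ⟨j, Finset.mem_Icc.2 ⟨by omega, by exact_mod_cast hjN⟩, ?_⟩
  rw [zpow_natCast, Equiv.Perm.coe_pow]
  exact Set.image_mono (Set.subset_iUnion P.B k) hyj

end KRPart

section

variable {X : Type*} [MetricSpace X] [CompactSpace X]

theorem KRPart.exists_refining_of_forall_small {T : X ≃ₜ X} {n : ℕ} {x : X}
    (hx : ∀ ε : ℝ, 0 < ε → ∃ P : KRPart ⇑T, P.d ≤ n ∧
        (∀ (k : Fin P.d) (j : ℕ), j < P.h k → Metric.diam ((⇑T)^[j] '' P.B k) < ε) ∧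
        Metric.diam P.base < ε ∧ x ∈ P.base)
    {Z : Set X} (hZ : IsClopen Z) (hZc : FiniteCovering T Z)
    {Q : Finset (Set X)} (hQ : IsClopenPartition Q) :
    ∃ P : KRPart ⇑T, P.d ≤ n ∧ P.base ⊆ Z ∧ Metric.diam P.base ≤ Metric.diam Z / 2 ∧
      ∀ (k : Fin P.d) (j : ℕ), j < P.h k → ∃ q ∈ Q, (⇑T)^[j] '' P.B k ⊆ q := by
  have : Nonempty X := ⟨x⟩
  obtain ⟨m, hm⟩ := hZc.exists_zpow_apply_mem x
  set e := T ^ m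
  have he : Function.Semiconj e T T := T.semiconj_zpow m
  obtain ⟨δ₁, hδ₁, hδ₁Q⟩ := exists_pos_forall_image_subset_of_diam_lt e.continuous
    (c := fun q : Q => (q : Set X)) (fun q => (hQ.1 q q.2).isOpen)
    (by rw [Set.iUnion_subtype]; exact hQ.2.1)
  obtain ⟨δ₂, hδ₂, hδ₂Z⟩ := Metric.isOpen_iff.1 (hZ.isOpen.preimage e.continuous) x hm
  obtain ⟨δ₃, hδ₃, hδ₃Z⟩ : ∃ δ > 0, ∀ s : Set X, Metric.diam s < δ → e '' s ⊆ Z →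
      Metric.diam (e '' s) ≤ Metric.diam Z / 2 := by
    rcases (Metric.diam_nonneg (s := Z)).eq_or_lt with hZ0 | hZ0
    · refine ⟨1, one_pos, fun s _ hs => ?_⟩
      linarith [Metric.diam_mono hs Metric.isBounded_of_compactSpace]
    · obtain ⟨δ, hδ, hδdiam⟩ := exists_pos_forall_diam_image_le e.continuous (half_pos hZ0)
      exact ⟨δ, hδ, fun s hs _ => hδdiam s hs⟩
  obtain ⟨P, hPd, hPlev, hPdiam, hxP⟩ := hx (min δ₁ (min δ₂ δ₃)) (by positivity)
  have hbase : e '' P.base ⊆ Z := by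
    refine Set.image_subset_iff.2 fun y hy => hδ₂Z ?_
    exact (Metric.dist_le_diam_of_mem Metric.isBounded_of_compactSpace hy hxP).trans_lt
      (hPdiam.trans_le ((min_le_right _ _).trans (min_le_left _ _)))
  refine ⟨P.map e he, hPd, P.map_base e he ▸ hbase, ?_, fun k j hj => ?_⟩
  · rw [P.map_base e he]
    exact hδ₃Z _ (hPdiam.trans_le ((min_le_right _ _).trans (min_le_right _ _))) hbase
  · obtain ⟨q, hq⟩ := hδ₁Q _ ((hPlev k j hj).trans_le (min_le_left _ _))
    exact ⟨q, q.2, (he.image_iterate_image j _).trans_subset hq⟩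

theorem KRPart.exists_halving_of_refining [TotallyDisconnectedSpace X] {T : X ≃ₜ X} {n : ℕ}
    (hB : ∀ Z : Set X, IsClopen Z → FiniteCovering T Z →
      ∀ Q : Finset (Set X), IsClopenPartition Q →
        ∃ P : KRPart ⇑T, P.d ≤ n ∧ P.base ⊆ Z ∧
          Metric.diam P.base ≤ Metric.diam Z / 2 ∧
          ∀ (k : Fin P.d) (j : ℕ), j < P.h k → ∃ q ∈ Q, (⇑T)^[j] '' P.B k ⊆ q)
    (P : KRPart ⇑T) {ε : ℝ} (hε : 0 < ε) :
    ∃ P' : KRPart ⇑T, P'.d ≤ n ∧ P'.base ⊆ P.base ∧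
      Metric.diam P'.base ≤ Metric.diam P.base / 2 ∧
      ∀ (k : Fin P'.d) (j : ℕ), j < P'.h k → Metric.diam ((⇑T)^[j] '' P'.B k) < ε := by
  obtain ⟨Q, hQ, hQdiam⟩ := exists_isClopenPartition_diam_lt (X := X) hε
  obtain ⟨P', hd, hsub, hdiam, hrefine⟩ := hB _ P.isClopen_base (P.finiteCovering_base T) Q hQ
  refine ⟨P', hd, hsub, hdiam, fun k j hj => ?_⟩
  obtain ⟨q, hq, hsubq⟩ := hrefine k j hj
  exact (Metric.diam_mono hsubq Metric.isBounded_of_compactSpace).trans_lt (hQdiam q hq)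

theorem KRPart.exists_forall_small_of_halving [Nonempty X] {T : X → X} {n : ℕ} (P₀ : KRPart T)
    (hstep : ∀ (P : KRPart T) (ε : ℝ), 0 < ε →
      ∃ P' : KRPart T, P'.d ≤ n ∧ P'.base ⊆ P.base ∧
        Metric.diam P'.base ≤ Metric.diam P.base / 2 ∧
        ∀ (k : Fin P'.d) (j : ℕ), j < P'.h k → Metric.diam (T^[j] '' P'.B k) < ε) :
    ∃ x : X, ∀ ε : ℝ, 0 < ε → ∃ P : KRPart T, P.d ≤ n ∧
        (∀ (k : Fin P.d) (j : ℕ), j < P.h k → Metric.diam (T^[j] '' P.B k) < ε) ∧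
        Metric.diam P.base < ε ∧ x ∈ P.base := by
  choose next hd hsub hdiam hlev using fun (P : KRPart T) (i : ℕ) =>
    hstep P ((1 / 2) ^ i) (by positivity)
  let seq : ℕ → KRPart T := fun i => Nat.rec P₀ (fun i P => next P i) i
  have hseq_diam : ∀ i, Metric.diam (seq i).base ≤ Metric.diam P₀.base * (1 / 2) ^ i := by
    intro i
    induction i with
    | zero => simp [seq]
    | succ i ih =>
      calc Metric.diam (seq (i + 1)).base ≤ Metric.diam (seq i).base / 2 := hdiam _ _
        _ ≤ Metric.diam P₀.base * (1 / 2) ^ (i + 1) := by rw [pow_succ]; linarith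
  obtain ⟨x, hx⟩ := IsCompact.nonempty_iInter_of_sequence_nonempty_isCompact_isClosed
    (fun i => (seq i).base) (fun i => hsub _ _) (fun i => (seq i).base_nonempty)
    (seq 0).isClopen_base.isClosed.isCompact (fun i => (seq i).isClopen_base.isClosed)
  refine ⟨x, fun ε hε => ?_⟩
  have hpow := tendsto_pow_atTop_nhds_zero_of_lt_one (by norm_num : (0 : ℝ) ≤ 1 / 2)
    (by norm_num)
  have hsmall : ∀ᶠ i in Filter.atTop,
      Metric.diam P₀.base * (1 / 2) ^ i < ε ∧ ((1 : ℝ) / 2) ^ i < ε :=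
    ((hpow.const_mul _).eventually (gt_mem_nhds (by simpa using hε))).and
      (hpow.eventually (gt_mem_nhds hε))
  obtain ⟨i, hbase, hlevel⟩ := hsmall.exists
  refine ⟨seq (i + 1), hd _ _, fun k j hj => (hlev _ _ k j hj).trans hlevel, ?_,
    Set.mem_iInter.1 hx (i + 1)⟩
  calc Metric.diam (seq (i + 1)).base ≤ Metric.diam (seq i).base / 2 := hdiam _ _
    _ ≤ Metric.diam (seq i).base := half_le_self Metric.diam_nonneg
    _ < ε := (hseq_diam i).trans_lt hbase

end

theorem statement_1_general {X : Type*} [MetricSpace X] [CompactSpace X] [Nonempty X]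
    [TotallyDisconnectedSpace X] (T : X ≃ₜ X) (n : ℕ) :
    (∃ x : X, ∀ ε : ℝ, 0 < ε → ∃ P : KRPart ⇑T, P.d ≤ n ∧
        (∀ (k : Fin P.d) (j : ℕ), j < P.h k → Metric.diam ((⇑T)^[j] '' P.B k) < ε) ∧
        Metric.diam P.base < ε ∧ x ∈ P.base) ↔
    (∀ Z : Set X, IsClopen Z → FiniteCovering T Z →
      ∀ Q : Finset (Set X), IsClopenPartition Q →
        ∃ P : KRPart ⇑T, P.d ≤ n ∧ P.base ⊆ Z ∧
          Metric.diam P.base ≤ Metric.diam Z / 2 ∧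
          ∀ (k : Fin P.d) (j : ℕ), j < P.h k → ∃ q ∈ Q, (⇑T)^[j] '' P.B k ⊆ q) :=
  ⟨fun ⟨_, hx⟩ _ hZ hZc _ hQ => KRPart.exists_refining_of_forall_small hx hZ hZc hQ,
    fun hB => (KRPart.trivial T).exists_forall_small_of_halving fun P _ hε =>
      KRPart.exists_halving_of_refining hB P hε⟩

/-- Theorem 3.3, (2) ⇔ (3). For an essentially minimal Cantor system and
`n ≥ 1`, the pointwise Kakutani–Rohlin smallness condition with at most `n` towers is
equivalent to the refinement condition. -/
theorem statement_1 {X : Type*} [MetricSpace X] [CompactSpace X] [Nonempty X]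
    [TotallyDisconnectedSpace X] (hPerf : Perfect (Set.univ : Set X))
    (hbd : ∀ x y : X, dist x y ≤ 1) (T : X ≃ₜ X)
    (hEM : EssentiallyMinimal ⇑T) (n : ℕ) (hn : 1 ≤ n) :
    (∃ x : X, ∀ ε : ℝ, 0 < ε → ∃ P : KRPart ⇑T, P.d ≤ n ∧
        (∀ (k : Fin P.d) (j : ℕ), j < P.h k → Metric.diam ((⇑T)^[j] '' P.B k) < ε) ∧
        Metric.diam P.base < ε ∧ x ∈ P.base) ↔
    (∀ Z : Set X, IsClopen Z → FiniteCovering T Z →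
      ∀ Q : Finset (Set X), IsClopenPartition Q →
        ∃ P : KRPart ⇑T, P.d ≤ n ∧ P.base ⊆ Z ∧
          Metric.diam P.base ≤ Metric.diam Z / 2 ∧
          ∀ (k : Fin P.d) (j : ℕ), j < P.h k → ∃ q ∈ Q, (⇑T)^[j] '' P.B k ⊆ q) :=
  statement_1_general T n

end SubshiftRank
end

section
/- Let 𝒵 = {x ∈ {0,1}^ℤ : for all n there is m > n with x(m) = 0, and for all n there is m > n with x(−m) = 0}. Let x ∈ 𝒵 and v ∈ ℱ. Then the following are equivalent: (i) x is built from v; (ii) for every m ∈ ℕ there exists a finite word u built from {v} such that the restriction x↾[−m,m] is a subword of u. -/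
namespace SubshiftRank

/-! A parsing of `x` by `v` on a window `W` is a set `P` of starting points of copies of `v`,
pairwise at distance at least `|v|`, that agree with `x` on `W` and cover every `0` of `x` in `W`.
A finite word built from `v`, padded with `1`s on both sides, has a parsing on all of `ℤ`, so by
translation every central window of `x` has a parsing on that window. A limit of these window
parsings along an ultrafilter (compactness of `2^ℤ`) parses all of `x`; as `x` has `0`s arbitrarily
far out on both sides, this parsing is unbounded in both directions, and its increasing enumeration
exhibits `x` as built from `v`. Conversely, the segment of `x` between two occurrences of `v` in a
building of `x` is a finite word built from `v`. -/

theorem exists_set_frequently_agree {ι : Type*} (f : ℕ → Set ι) :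
    ∃ g : Set ι, ∀ (T : Finset ι) (m₀ : ℕ), ∃ m, m₀ ≤ m ∧ ∀ i ∈ T, (i ∈ f m ↔ i ∈ g) := by
  let U : Ultrafilter ℕ := Ultrafilter.of Filter.atTop
  refine ⟨{i | ∀ᶠ m in U, i ∈ f m}, fun T m₀ => ?_⟩
  have hagree : ∀ i, ∀ᶠ m in U, (i ∈ f m ↔ i ∈ {i | ∀ᶠ m in U, i ∈ f m}) := by
    intro i
    rcases U.em (fun m => i ∈ f m) with h | h
    · exact h.mono fun m hm => iff_of_true hm h
    · exact h.mono fun m hm => iff_of_false hm (Ultrafilter.eventually_not.1 h)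
  have hlarge : ∀ᶠ m in U, m₀ ≤ m := Ultrafilter.of_le _ (Filter.eventually_ge_atTop m₀)
  exact (hlarge.and ((Filter.eventually_all_finset T).2 fun i _ => hagree i)).exists

theorem exists_strictMono_range_eq {P : Set ℤ} (hup : ∀ n, ∃ p ∈ P, n < p)
    (hdown : ∀ n, ∃ p ∈ P, p < n) : ∃ e : ℤ → ℤ, StrictMono e ∧ Set.range e = P := by
  classical
  let := LinearLocallyFiniteOrder.succOrder P
  let := LinearLocallyFiniteOrder.predOrder P
  have : NoMaxOrder P := ⟨fun a => let ⟨p, hp, h⟩ := hup a; ⟨⟨p, hp⟩, h⟩⟩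
  have : NoMinOrder P := ⟨fun a => let ⟨p, hp, h⟩ := hdown a; ⟨⟨p, hp⟩, h⟩⟩
  have : Nonempty P := let ⟨p, hp, _⟩ := hup 0; ⟨⟨p, hp⟩⟩
  let f : P ≃o ℤ := orderIsoIntOfLinearSuccPredArch
  refine ⟨fun n => f.symm n, fun a b h => f.symm.strictMono h, ?_⟩
  exact (f.symm.surjective.range_comp _).trans Subtype.range_coe

structure IsParsingOn (v : Word) (x : ℤ → Bool) (P W : Set ℤ) : Prop where
  spaced : ∀ p ∈ P, ∀ p' ∈ P, p < p' → p + v.length ≤ p'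
  occurs : ∀ p ∈ P, ∀ k : ℕ, k < v.length → p + k ∈ W → v.getD k false = x (p + k)
  covers : ∀ q ∈ W, x q = false → ∃ p ∈ P, p ≤ q ∧ q < p + v.length

namespace IsParsingOn

variable {v : Word} {x y : ℤ → Bool} {P W W' : Set ℤ}

theorem mono (h : IsParsingOn v x P W) (hW : W' ⊆ W) : IsParsingOn v x P W' where
  spaced := h.spaced
  occurs p hp k hk hpk := h.occurs p hp k hk (hW hpk)
  covers q hq := h.covers q (hW hq)

theorem comp_add (h : IsParsingOn v y P Set.univ) (c : ℤ) (hxy : ∀ q ∈ W, x q = y (q + c)) :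
    IsParsingOn v x ((· + c) ⁻¹' P) W where
  spaced p hp p' hp' hlt := by
    have := h.spaced (p + c) hp (p' + c) hp' (by omega)
    omega
  occurs p hp k hk hpk := by
    rw [hxy _ hpk, h.occurs _ hp k hk trivial]
    ring_nf
  covers q hq hxq := by
    obtain ⟨p, hp, h₁, h₂⟩ := h.covers (q + c) trivial (by rwa [← hxy q hq])
    exact ⟨p - c, by simpa using hp, by omega, by omega⟩

end IsParsingOn

def padOnes (u : Word) (i : ℤ) : Bool := if 0 ≤ i then u.getD i.toNat true else true

theorem padOnes_natCast {u : Word} {k : ℕ} (hk : k < u.length) :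
    padOnes u k = u.getD k false := by
  simp only [padOnes, Nat.cast_nonneg, if_true, Int.toNat_natCast]
  rw [List.getD_eq_getElem _ _ hk, List.getD_eq_getElem _ _ hk]

theorem mem_Ico_of_padOnes_eq_false {u : Word} {i : ℤ} (h : padOnes u i = false) :
    i ∈ Set.Ico 0 (u.length : ℤ) := by
  unfold padOnes at h
  split_ifs at h with h₀
  by_contra hi
  rw [List.getD_eq_default _ _ (by simp at hi; omega)] at h
  exact Bool.noConfusion h

theorem padOnes_append (u w : Word) (i : ℤ) :
    padOnes (u ++ w) i = if i < u.length then padOnes u i else padOnes w (i - u.length) := by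
  unfold padOnes
  split_ifs <;> first
    | rfl
    | omega
    | (rw [List.getD_append _ _ _ _ (by omega)])
    | (rw [List.getD_append_right _ _ _ _ (by omega)]; congr 1; omega)

theorem padOnes_spacer (s : ℕ) (i : ℤ) : padOnes (spacer s) i = true := by
  unfold padOnes spacer
  split_ifs
  · rcases lt_or_ge i.toNat s with h | h
    · exact List.getD_replicate _ h
    · exact List.getD_eq_default _ _ (by simpa using h)
  · rfl

theorem padOnes_append_spacer_append (u w : Word) (s : ℕ) (i : ℤ) :
    padOnes (u ++ spacer s ++ w) i =
      if i < u.length then padOnes u i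
      else if i < u.length + s then true else padOnes w (i - (u.length + s)) := by
  rw [padOnes_append, padOnes_append, padOnes_spacer]
  simp only [List.length_append, spacer, List.length_replicate, Nat.cast_add]
  split_ifs <;> first | rfl | omega

theorem isParsingOn_padOnes_self (v : Word) : IsParsingOn v (padOnes v) {0} Set.univ where
  spaced p hp p' hp' hlt := by simp_all
  occurs p hp k hk _ := by rw [Set.mem_singleton_iff.1 hp, zero_add, padOnes_natCast hk]
  covers q _ hq := by
    have := mem_Ico_of_padOnes_eq_false hq
    exact ⟨0, rfl, this.1, by simpa using this.2⟩

section Parsing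

variable {v : Word} {x : ℤ → Bool}

theorem IsParsingOn.prepend {w : Word} {P : Set ℤ}
    (h : IsParsingOn v (padOnes w) P Set.univ) (hP : ∀ p ∈ P, 0 ≤ p) (s : ℕ) :
    IsParsingOn v (padOnes (v ++ spacer s ++ w))
      (insert 0 ((· - (v.length + s : ℤ)) ⁻¹' P)) Set.univ where
  spaced p hp p' hp' hlt := by
    rcases hp with rfl | (hp : p - (v.length + s : ℤ) ∈ P) <;>
      rcases hp' with rfl | (hp' : p' - (v.length + s : ℤ) ∈ P)
    · omega
    · have := hP _ hp'
      omega
    · have := hP _ hp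
      omega
    · have := h.spaced _ hp _ hp' (by omega)
      omega
  occurs p hp k hk _ := by
    rw [padOnes_append_spacer_append]
    rcases hp with rfl | (hp : p - (v.length + s : ℤ) ∈ P)
    · rw [if_pos (by omega), zero_add, padOnes_natCast hk]
    · have := hP _ hp
      rw [if_neg (by omega), if_neg (by omega), h.occurs _ hp k hk trivial]
      ring_nf
  covers q _ hq := by
    rw [padOnes_append_spacer_append] at hq
    split_ifs at hq with h₁ h₂
    · exact ⟨0, Set.mem_insert _ _, (mem_Ico_of_padOnes_eq_false hq).1, by omega⟩
    · obtain ⟨p, hp, hpq, hqp⟩ := h.covers _ trivial hq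
      exact ⟨p + (v.length + s), Or.inr (by simpa using hp), by omega, by omega⟩

theorem exists_isParsingOn_padOnes_foldr (l : List (Word × ℕ)) (hl : ∀ p ∈ l, p.1 = v) :
    ∃ P, (∀ p ∈ P, 0 ≤ p) ∧
      IsParsingOn v (padOnes (l.foldr (fun p acc => p.1 ++ spacer p.2 ++ acc) v)) P Set.univ := by
  induction l with
  | nil => exact ⟨{0}, by simp, isParsingOn_padOnes_self v⟩
  | cons p l ih =>
    obtain ⟨P, hP₀, hP⟩ := ih fun q hq => hl q (List.mem_cons_of_mem _ hq)
    obtain ⟨w, s⟩ := p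
    obtain rfl : v = w := (hl _ List.mem_cons_self).symm
    refine ⟨_, ?_, hP.prepend hP₀ s⟩
    rintro p (rfl | (hp : p - (v.length + s : ℤ) ∈ P))
    · exact le_rfl
    · have := hP₀ _ hp
      omega

theorem BuiltFrom.exists_isParsingOn_padOnes {u : Word} (h : BuiltFrom u {v}) :
    ∃ P, IsParsingOn v (padOnes u) P Set.univ := by
  obtain ⟨⟨pairs, last⟩, ⟨-, hpieces⟩, rfl⟩ := h
  have hlast : last = v := hpieces last (by simp [Building.pieces])
  have hpairs : ∀ p ∈ pairs, p.1 = v := fun p hp => hpieces p.1 <| by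
    simp only [Building.pieces, List.mem_append, List.mem_map]
    exact .inl ⟨p, hp, rfl⟩
  obtain ⟨P, -, hP⟩ := exists_isParsingOn_padOnes_foldr pairs hpairs
  exact ⟨P, by rwa [Building.word, hlast]⟩

def window (x : ℤ → Bool) (lo : ℤ) (n : ℕ) : Word := List.ofFn fun j : Fin n => x (lo + (j : ℕ))

theorem exists_padOnes_eq_of_infix {w u : Word} (h : w <:+: u) :
    ∃ c : ℤ, ∀ k : ℕ, k < w.length → padOnes u (c + k) = w.getD k false := by
  obtain ⟨s, t, rfl⟩ := h
  refine ⟨s.length, fun k hk => ?_⟩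
  rw [padOnes_append, if_pos (by rw [List.length_append]; push_cast; omega), padOnes_append,
    if_neg (by omega), add_sub_cancel_left, padOnes_natCast hk]

theorem BuiltFrom.exists_isParsingOn_of_window_infix {u : Word} (hu : BuiltFrom u {v}) {lo : ℤ}
    {n : ℕ} (hw : window x lo n <:+: u) : ∃ P, IsParsingOn v x P (Set.Ico lo (lo + n)) := by
  obtain ⟨P, hP⟩ := hu.exists_isParsingOn_padOnes
  obtain ⟨c, hc⟩ := exists_padOnes_eq_of_infix hw
  refine ⟨_, hP.comp_add (c - lo) fun q hq => ?_⟩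
  rw [Set.mem_Ico] at hq
  obtain ⟨k, rfl⟩ : ∃ k : ℕ, q = lo + k := ⟨(q - lo).toNat, by omega⟩
  have hk : k < n := by omega
  rw [show lo + k + (c - lo) = c + k by ring, hc k (by simpa [window] using hk)]
  simp [window, hk]

theorem isParsingOn_univ_of_forall_Icc (h : ∀ m : ℕ, ∃ P, IsParsingOn v x P (Set.Icc (-m) m)) :
    ∃ P, IsParsingOn v x P Set.univ := by
  choose P hP using h
  obtain ⟨Q, hQ⟩ := exists_set_frequently_agree P
  refine ⟨Q, ⟨fun p hp p' hp' hlt => ?_, fun p hp k hk _ => ?_, fun q _ hq => ?_⟩⟩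
  · obtain ⟨m, -, hm⟩ := hQ {p, p'} 0
    exact (hP m).spaced p ((hm p (by simp)).2 hp) p' ((hm p' (by simp)).2 hp') hlt
  · obtain ⟨m, hm₀, hm⟩ := hQ {p} (p.natAbs + v.length)
    exact (hP m).occurs p ((hm p (Finset.mem_singleton_self p)).2 hp) k hk
      (Set.mem_Icc.2 ⟨by omega, by omega⟩)
  · obtain ⟨m, hm₀, hm⟩ := hQ (Finset.Icc (q - v.length) q) q.natAbs
    obtain ⟨p, hp, h₁, h₂⟩ := (hP m).covers q (Set.mem_Icc.2 ⟨by omega, by omega⟩) hq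
    exact ⟨p, (hm p (Finset.mem_Icc.2 ⟨by omega, h₁⟩)).1 hp, h₁, h₂⟩

theorem IsParsingOn.biBuiltFrom {P : Set ℤ} (h : IsParsingOn v x P Set.univ)
    (hx1 : ∀ n : ℤ, ∃ m : ℤ, n < m ∧ x m = false)
    (hx2 : ∀ n : ℤ, ∃ m : ℤ, n < m ∧ x (-m) = false) : BiBuiltFrom x v := by
  have hup : ∀ n, ∃ p ∈ P, n < p := by
    intro n
    obtain ⟨q, hq, hxq⟩ := hx1 (n + v.length)
    obtain ⟨p, hp, -, hqp⟩ := h.covers q trivial hxq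
    exact ⟨p, hp, by omega⟩
  have hdown : ∀ n, ∃ p ∈ P, p < n := by
    intro n
    obtain ⟨q, hq, hxq⟩ := hx2 (-n)
    obtain ⟨p, hp, hpq, -⟩ := h.covers (-q) trivial hxq
    exact ⟨p, hp, by omega⟩
  obtain ⟨e, he, rfl⟩ := exists_strictMono_range_eq hup hdown
  refine ⟨e, he, fun i => h.spaced _ ⟨i, rfl⟩ _ ⟨i + 1, rfl⟩ (he (lt_add_one i)),
    fun n => ?_, fun n => ?_, fun i k hk => h.occurs _ ⟨i, rfl⟩ k hk trivial, fun q hq => ?_⟩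
  · obtain ⟨_, ⟨i, rfl⟩, hi⟩ := hup n
    exact ⟨i, hi⟩
  · obtain ⟨_, ⟨i, rfl⟩, hi⟩ := hdown n
    exact ⟨i, hi⟩
  · by_contra hxq
    obtain ⟨_, ⟨i, rfl⟩, hi⟩ := h.covers q trivial (Bool.eq_false_iff.2 hxq)
    exact hq i hi

end Parsing

theorem builtFrom_append_spacer_append {S : Set Word} {w w' : Word} (hw : w ∈ S) (hw' : w' ∈ S)
    (s : ℕ) : BuiltFrom (w ++ spacer s ++ w') S :=
  ⟨⟨[(w, s)], w'⟩, ⟨by simp, by simp [Building.pieces, hw, hw']⟩, by simp [Building.word]⟩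

theorem BuiltFrom.append_spacer_append {S : Set Word} {u w : Word} (hu : BuiltFrom u S)
    (hw : w ∈ S) (s : ℕ) : BuiltFrom (w ++ spacer s ++ u) S := by
  obtain ⟨b, ⟨-, hpieces⟩, rfl⟩ := hu
  refine ⟨⟨(w, s) :: b.pairs, b.last⟩, ⟨by simp, fun w' hw' => ?_⟩, rfl⟩
  simp only [Building.pieces, List.map_cons, List.cons_append, List.mem_cons] at hw'
  rcases hw' with rfl | hw'
  · exact hw
  · exact hpieces w' hw'

section Window

variable {x : ℤ → Bool}

theorem window_add (lo : ℤ) (m n : ℕ) :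
    window x lo (m + n) = window x lo m ++ window x (lo + m) n := by
  simp [window, List.ofFn_add, add_assoc]

theorem window_infix_window {lo lo' : ℤ} {n n' : ℕ} (h₁ : lo ≤ lo') (h₂ : lo' + n' ≤ lo + n) :
    window x lo' n' <:+: window x lo n := by
  obtain ⟨d, rfl⟩ : ∃ d : ℕ, lo' = lo + d := ⟨(lo' - lo).toNat, by omega⟩
  obtain ⟨e, rfl⟩ : ∃ e : ℕ, n = d + n' + e := ⟨n - d - n', by omega⟩
  rw [window_add, window_add]
  exact ⟨_, _, rfl⟩

theorem window_eq_of_occursAtBi {v : Word} {p : ℤ} (h : OccursAtBi v x p) :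
    window x p v.length = v := by
  refine List.ext_getElem (by simp [window]) fun k hk hk' => ?_
  rw [← List.getD_eq_getElem _ false hk', h k hk']
  simp [window]

theorem window_eq_spacer {p : ℤ} {s : ℕ} (h : ∀ k : ℕ, k < s → x (p + k) = true) :
    window x p s = spacer s :=
  List.ext_getElem (by simp [window, spacer])
    fun k hk _ => by simp [window, spacer, h k (by simpa [window] using hk)]

theorem window_eq_append_spacer_append {v : Word} {p p' : ℤ} (L : ℕ) (hp : OccursAtBi v x p)
    (hle : p + v.length ≤ p') (hones : ∀ q, p + v.length ≤ q → q < p' → x q = true) :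
    window x p ((p' - p).toNat + L) = v ++ spacer (p' - p - v.length).toNat ++ window x p' L := by
  rw [show (p' - p).toNat + L = v.length + (p' - p - v.length).toNat + L by omega,
    window_add, window_add, window_eq_of_occursAtBi hp,
    window_eq_spacer fun k hk => hones _ (by omega) (by omega)]
  congr 2
  push_cast
  omega

theorem BiBuiltFrom.exists_builtFrom_infix {v : Word} (h : BiBuiltFrom x v) (lo : ℤ) (n : ℕ) :
    ∃ u, BuiltFrom u {v} ∧ window x lo n <:+: u := by
  obtain ⟨pos, hmono, hgap, habove, hbelow, hocc, htrue⟩ := h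
  have hones : ∀ a q, pos a + v.length ≤ q → q < pos (a + 1) → x q = true := by
    refine fun a q h₁ h₂ => htrue q fun i ⟨hi₁, hi₂⟩ => ?_
    rcases le_or_gt i a with hia | hia
    · have := hmono.monotone hia
      omega
    · have := hmono.monotone (show a + 1 ≤ i by omega)
      omega
  have hbuilt : ∀ n : ℕ, ∀ a b : ℤ, b = a + n + 1 →
      BuiltFrom (window x (pos a) ((pos b - pos a).toNat + v.length)) {v} := by
    intro n
    induction n with
    | zero =>
      rintro a b rfl
      rw [Nat.cast_zero, add_zero, window_eq_append_spacer_append _ (hocc a) (hgap a) (hones a),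
        window_eq_of_occursAtBi (hocc _)]
      exact builtFrom_append_spacer_append (Set.mem_singleton v) (Set.mem_singleton v) _
    | succ n ih =>
      intro a b hb
      have := hmono.monotone (show a + 1 ≤ b by omega)
      rw [show (pos b - pos a).toNat + v.length =
          (pos (a + 1) - pos a).toNat + ((pos b - pos (a + 1)).toNat + v.length) by
            have := hgap a; omega,
        window_eq_append_spacer_append _ (hocc a) (hgap a) (hones a)]
      exact (ih (a + 1) b (by omega)).append_spacer_append (Set.mem_singleton v) _
  obtain ⟨a, ha⟩ := hbelow (lo + 1)
  obtain ⟨b, hb⟩ := habove (lo + n)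
  have hab : a < b := hmono.lt_iff_lt.1 (by omega)
  exact ⟨_, hbuilt (b - a - 1).toNat a b (by omega), window_infix_window (by omega) (by omega)⟩

end Window

theorem statement_3_general (x : ℤ → Bool)
    (hx1 : ∀ n : ℤ, ∃ m : ℤ, n < m ∧ x m = false)
    (hx2 : ∀ n : ℤ, ∃ m : ℤ, n < m ∧ x (-m) = false)
    (v : Word) :
    BiBuiltFrom x v ↔
      ∀ m : ℕ, ∃ u : Word, BuiltFrom u {v} ∧
        (List.ofFn fun j : Fin (2 * m + 1) => x (-(m : ℤ) + (j : ℕ))) <:+: u := by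
  refine ⟨fun h m => h.exists_builtFrom_infix (-m) (2 * m + 1), fun h => ?_⟩
  obtain ⟨P, hP⟩ := isParsingOn_univ_of_forall_Icc fun m => by
    obtain ⟨u, hu, hw⟩ := h m
    obtain ⟨P, hP⟩ := hu.exists_isParsingOn_of_window_infix hw
    exact ⟨P, hP.mono fun q hq => by rw [Set.mem_Icc] at hq; rw [Set.mem_Ico]; omega⟩
  exact hP.biBuiltFrom hx1 hx2

/-- Lemma 5.1. For `x ∈ 𝒵` and `v ∈ ℱ`: `x` is built from `v` iff every
central window of `x` is a subword of some finite word built from `v`. -/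
theorem statement_3 (x : ℤ → Bool)
    (hx1 : ∀ n : ℤ, ∃ m : ℤ, n < m ∧ x m = false)
    (hx2 : ∀ n : ℤ, ∃ m : ℤ, n < m ∧ x (-m) = false)
    (v : Word) (hv : v ∈ FF) :
    BiBuiltFrom x v ↔
      ∀ m : ℕ, ∃ u : Word, BuiltFrom u {v} ∧
        (List.ofFn fun j : Fin (2 * m + 1) => x (-(m : ℤ) + (j : ℕ))) <:+: u :=
  statement_3_general x hx1 hx2 v

end SubshiftRank
end
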